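/- arXiv:math/0504460 — 2 statements merged into one kernel-verified Lean document; each statement's English description precedes it below -/
import Mathlib

section
/- Let μ^1, μ^2 be partitions, let q ∈ ℂ with |q| > 1, and let a ∈ ℂ. Define f_μ(q) = Σ_{x∈μ} q^{c(x)} (a finite sum over the cells of μ) and f_{μ^1 μ^2}(q) = Σ_{i,j≥1} (q^{μ^1_i + μ^2_j − i − j + 1} − q^{−i−j+1}), an absolutely convergent double series. Then the series Σ_{i≥1} (q^{μ^1_i − i} − a q^{−i}) and Σ_{j≥1} (q^{μ^2_j − j} − a q^{−j}) converge absolutely and q · [ (Σ_{i≥1} (q^{μ^1_i − i} − a q^{−i})) · (Σ_{j≥1} (q^{μ^2_j − j} − a q^{−j})) − (1 − a)² / (q − 1)² ] = f_{μ^1 μ^2}(q) − a f_{μ^1}(q) − a f_{μ^2}(q). -/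
/-- A partition `μ = (μ_1 ≥ μ_2 ≥ …)`: a weakly decreasing, eventually zero sequence of
naturals.  We index parts from `0`, so `part i` is the part `μ_{i+1}` of the paper. -/
structure Partition' where
  part : ℕ → ℕ
  antitone' : ∀ ⦃i j : ℕ⦄, i ≤ j → part j ≤ part i
  eventually_zero : ∃ N, ∀ n, N ≤ n → part n = 0

namespace Partition'

/-- The Young diagram of `μ`, as a set of (0-indexed) cells `(i, j)`, `j < μ_{i+1}`. -/
def cellsSet (μ : Partition') : Set (ℕ × ℕ) := {x | x.2 < μ.part x.1}

lemma cellsSet_finite (μ : Partition') : μ.cellsSet.Finite := by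
  obtain ⟨N, hN⟩ := μ.eventually_zero
  have hsub : μ.cellsSet ⊆ Set.Iio N ×ˢ Set.Iio (μ.part 0) := by
    rintro ⟨i, j⟩ hx
    have hj : j < μ.part i := hx
    refine Set.mem_prod.mpr ⟨?_, ?_⟩
    · by_contra h
      simp only [Set.mem_Iio, not_lt] at h
      rw [hN i h] at hj
      omega
    · exact Set.mem_Iio.mpr (lt_of_lt_of_le hj (μ.antitone' (Nat.zero_le i)))
  exact ((Set.finite_Iio N).prod (Set.finite_Iio (μ.part 0))).subset hsub

/-- The cells of the Young diagram of `μ`, as a finite set. -/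
noncomputable def cells (μ : Partition') : Finset (ℕ × ℕ) := μ.cellsSet_finite.toFinset

/-- `|μ|`, the size (number of cells, i.e. sum of the parts) of `μ`. -/
noncomputable def size (μ : Partition') : ℕ := μ.cells.card

lemma row_finite (μ : Partition') (j : ℕ) : {i : ℕ | j < μ.part i}.Finite := by
  obtain ⟨N, hN⟩ := μ.eventually_zero
  apply (Set.finite_Iio N).subset
  intro i hi
  simp only [Set.mem_setOf_eq] at hi
  simp only [Set.mem_Iio]
  by_contra h
  push_neg at h
  rw [hN i h] at hi
  omega

/-- The conjugate (transposed) partition `μ^t`: `(μ^t)_{j+1} = #{i : μ_{i+1} > j}`. -/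
noncomputable def conj (μ : Partition') : Partition' where
  part j := Nat.card {i : ℕ | j < μ.part i}
  antitone' := by
    intro j k hjk
    exact Nat.card_mono (μ.row_finite j) (fun i hi => lt_of_le_of_lt hjk hi)
  eventually_zero := by
    refine ⟨μ.part 0, fun j hj => ?_⟩
    have h : {i : ℕ | j < μ.part i} = (∅ : Set ℕ) := by
      ext i
      simp only [Set.mem_setOf_eq, Set.mem_empty_iff_false, iff_false, not_lt]
      exact le_trans (μ.antitone' (Nat.zero_le i)) hj
    show Nat.card {i : ℕ | j < μ.part i} = 0
    rw [h]
    simp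

/-- The content `c(x) = j - i` of a (0-indexed) cell `x = (i,j)`. -/
def content (x : ℕ × ℕ) : ℤ := (x.2 : ℤ) - (x.1 : ℤ)

/-- The hook length `h(x) = μ_i + (μ^t)_j - i - j + 1` (1-indexed) of a cell of `μ`,
as an integer. -/
noncomputable def hook (μ : Partition') (x : ℕ × ℕ) : ℤ :=
  (μ.part x.1 : ℤ) + (μ.conj.part x.2 : ℤ) - (x.1 : ℤ) - (x.2 : ℤ) - 1

/-- `n(μ) = Σ_i (i-1) μ_i` (1-indexed), i.e. `Σ_i i * μ_{i+1}` (0-indexed). -/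
noncomputable def nstat (μ : Partition') : ℕ := ∑ᶠ i : ℕ, i * μ.part i

/-- The empty partition. -/
def empty : Partition' := ⟨fun _ => 0, fun _ _ _ => le_rfl, ⟨0, fun _ _ => rfl⟩⟩

/-- The number of (nonzero) parts of `μ`. -/
noncomputable def length (μ : Partition') : ℕ := μ.conj.part 0

end Partition'

/-!
Write `r_μ(i) = q^{μ_{i+1}-i-1} - q^{-i-1}`, which vanishes for `i ≥ ℓ(μ)`, and `T_μ = Σ_i r_μ(i)`.
The single series are `Σ_i r_μ(i) + (1 - a) Σ_i q^{-i-1} = T_μ + (1 - a)/(q - 1)`, the terms of the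
double series split as `q r_{μ¹}(i) r_{μ²}(j) + r_{μ¹}(i) q^{-j} + q^{-i} r_{μ²}(j)`, whose sum is
`q T_{μ¹} T_{μ²} + (T_{μ¹} + T_{μ²}) q/(q - 1)`, and summing the cells of each row geometrically
gives `(q - 1) f_μ = q T_μ`. The identity is then a rational identity in `T_{μ¹}, T_{μ²}, a, q`.
-/

open Finset

theorem Summable.norm_add {ι E : Type*} [SeminormedAddCommGroup E] {f g : ι → E}
    (hf : Summable fun i => ‖f i‖) (hg : Summable fun i => ‖g i‖) :
    Summable fun i => ‖f i + g i‖ :=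
  (hf.add hg).of_nonneg_of_le (fun _ => norm_nonneg _) fun _ => norm_add_le _ _

theorem HasSum.mul_of_summable_norm {ι ι' R : Type*} [NormedRing R] {f : ι → R} {g : ι' → R}
    {s t : R} (hf : HasSum f s) (hg : HasSum g t) (hf' : Summable fun i => ‖f i‖)
    (hg' : Summable fun i => ‖g i‖) : HasSum (fun p : ι × ι' => f p.1 * g p.2) (s * t) :=
  hf.mul hg (summable_mul_of_summable_norm' hf' hf.summable hg' hg.summable)

lemma sub_one_mul_sum_range_zpow_sub {K : Type*} [Field K] {q : K} (hq : q ≠ 0) (m : ℕ) (i : ℤ) :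
    (q - 1) * ∑ j ∈ range m, q ^ ((j : ℤ) - i) = q * (q ^ ((m : ℤ) - i - 1) - q ^ (-i - 1)) := by
  have hsplit : ∀ j : ℕ, q ^ ((j : ℤ) - i) = q ^ j * q ^ (-i) := fun j => by
    rw [sub_eq_add_neg, zpow_add₀ hq, zpow_natCast]
  rw [sum_congr rfl fun j _ => hsplit j, ← sum_mul, ← mul_assoc, mul_geom_sum]
  simp only [zpow_sub₀ hq, zpow_neg, zpow_natCast, zpow_one]
  field_simp

section Geometric

variable {K : Type*} [NormedField K] {q : K}

lemma ne_zero_of_one_lt_norm (hq : 1 < ‖q‖) : q ≠ 0 :=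
  ne_zero_of_norm_ne_zero (one_pos.trans hq).ne'

lemma hasSum_zpow_neg (hq : 1 < ‖q‖) : HasSum (fun n : ℕ => q ^ (-(n : ℤ))) (q / (q - 1)) := by
  have hq0 := ne_zero_of_one_lt_norm hq
  have hlt : ‖q⁻¹‖ < 1 := by rw [norm_inv]; exact inv_lt_one_of_one_lt₀ hq
  convert hasSum_geometric_of_norm_lt_one hlt using 1
  · ext n; rw [zpow_neg, zpow_natCast, inv_pow]
  · field_simp

lemma summable_norm_zpow_neg (hq : 1 < ‖q‖) : Summable fun n : ℕ => ‖q ^ (-(n : ℤ))‖ := by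
  have hlt : ‖q‖⁻¹ < 1 := inv_lt_one_of_one_lt₀ hq
  refine (summable_geometric_of_lt_one (by positivity) hlt).congr fun n => ?_
  rw [zpow_neg, zpow_natCast, norm_inv, norm_pow, inv_pow]

lemma zpow_neg_sub_one (hq : q ≠ 0) (n : ℤ) : q ^ (-n - 1) = q⁻¹ * q ^ (-n) := by
  rw [sub_eq_neg_add, zpow_add₀ hq, zpow_neg_one]

lemma hasSum_zpow_neg_sub_one (hq : 1 < ‖q‖) :
    HasSum (fun n : ℕ => q ^ (-(n : ℤ) - 1)) (q - 1)⁻¹ := by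
  have hq0 := ne_zero_of_one_lt_norm hq
  have hsum : q⁻¹ * (q / (q - 1)) = (q - 1)⁻¹ := by field_simp
  simpa only [zpow_neg_sub_one hq0, hsum] using (hasSum_zpow_neg hq).mul_left q⁻¹

lemma summable_norm_zpow_neg_sub_one (hq : 1 < ‖q‖) :
    Summable fun n : ℕ => ‖q ^ (-(n : ℤ) - 1)‖ := by
  refine ((summable_norm_zpow_neg hq).mul_left ‖q⁻¹‖).congr fun n => ?_
  rw [zpow_neg_sub_one (ne_zero_of_one_lt_norm hq), norm_mul]

end Geometric

namespace Partition'

variable {K : Type*} [NormedField K] (μ : Partition') {q : K}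

def rowTerm (q : K) (i : ℕ) : K := q ^ ((μ.part i : ℤ) - i - 1) - q ^ (-(i : ℤ) - 1)

lemma rowTerm_of_part_eq_zero {i : ℕ} (h : μ.part i = 0) : μ.rowTerm q i = 0 := by
  simp [rowTerm, h]

lemma exists_rowTerm_eq_zero (q : K) : ∃ N, ∀ i ∉ range N, μ.rowTerm q i = 0 := by
  obtain ⟨N, hN⟩ := μ.eventually_zero
  exact ⟨N, fun i hi => μ.rowTerm_of_part_eq_zero (hN i (by simpa using hi))⟩

lemma summable_rowTerm (q : K) : Summable (μ.rowTerm q) :=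
  let ⟨_, hN⟩ := μ.exists_rowTerm_eq_zero q
  summable_of_ne_finset_zero hN

lemma summable_norm_rowTerm (q : K) : Summable fun i => ‖μ.rowTerm q i‖ :=
  let ⟨_, hN⟩ := μ.exists_rowTerm_eq_zero q
  summable_of_ne_finset_zero fun i hi => by rw [hN i hi, norm_zero]

lemma sub_one_mul_sum_cells_zpow_content (hq : q ≠ 0) :
    (q - 1) * ∑ x ∈ μ.cells, q ^ content x = q * ∑' i, μ.rowTerm q i := by
  obtain ⟨N, hN⟩ := μ.eventually_zero
  have hcells : ∀ x : ℕ × ℕ, x ∈ μ.cells ↔ x.1 ∈ range N ∧ x.2 ∈ range (μ.part x.1) := by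
    rintro ⟨i, j⟩
    simp only [cells, cellsSet, Set.Finite.mem_toFinset, Set.mem_ofPred_eq, mem_range]
    refine ⟨fun hj => ⟨?_, hj⟩, And.right⟩
    by_contra! hi
    rw [hN i hi] at hj
    exact j.not_lt_zero hj
  have hrow : ∀ i ∉ range N, μ.rowTerm q i = 0 := fun i hi =>
    μ.rowTerm_of_part_eq_zero (hN i (by simpa using hi))
  rw [sum_finset_product μ.cells (range N) (fun i => range (μ.part i)) hcells,
    tsum_eq_sum hrow, mul_sum, mul_sum]
  exact sum_congr rfl fun i _ => sub_one_mul_sum_range_zpow_sub hq (μ.part i) i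

lemma zpow_part_sub_mul_zpow_eq (a : K) (i : ℕ) :
    q ^ ((μ.part i : ℤ) - i - 1) - a * q ^ (-(i : ℤ) - 1)
      = μ.rowTerm q i + (1 - a) * q ^ (-(i : ℤ) - 1) := by
  rw [rowTerm]; ring

lemma hasSum_zpow_part_sub_mul_zpow (hq : 1 < ‖q‖) (a : K) :
    HasSum (fun i : ℕ => q ^ ((μ.part i : ℤ) - i - 1) - a * q ^ (-(i : ℤ) - 1))
      (∑' i, μ.rowTerm q i + (1 - a) / (q - 1)) := by
  simp only [zpow_part_sub_mul_zpow_eq, div_eq_mul_inv]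
  exact (μ.summable_rowTerm q).hasSum.add ((hasSum_zpow_neg_sub_one hq).mul_left _)

lemma summable_norm_zpow_part_sub_mul_zpow (hq : 1 < ‖q‖) (a : K) :
    Summable fun i : ℕ => ‖q ^ ((μ.part i : ℤ) - i - 1) - a * q ^ (-(i : ℤ) - 1)‖ := by
  simp only [zpow_part_sub_mul_zpow_eq]
  refine (μ.summable_norm_rowTerm q).norm_add ?_
  simpa only [norm_mul] using (summable_norm_zpow_neg_sub_one hq).mul_left ‖1 - a‖

lemma zpow_part_add_part_sub_zpow_eq (ν : Partition') (hq : q ≠ 0) (i j : ℕ) :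
    q ^ ((μ.part i : ℤ) + (ν.part j : ℤ) - i - j - 1) - q ^ (-(i : ℤ) - j - 1)
      = q * (μ.rowTerm q i * ν.rowTerm q j) + μ.rowTerm q i * q ^ (-(j : ℤ))
        + q ^ (-(i : ℤ)) * ν.rowTerm q j := by
  simp only [rowTerm, zpow_sub₀ hq, zpow_add₀ hq, zpow_neg, zpow_natCast, zpow_one]
  field_simp
  ring

lemma hasSum_zpow_part_add_part_sub_zpow (ν : Partition') (hq : 1 < ‖q‖) :
    HasSum (fun p : ℕ × ℕ =>
        q ^ ((μ.part p.1 : ℤ) + (ν.part p.2 : ℤ) - p.1 - p.2 - 1) - q ^ (-(p.1 : ℤ) - p.2 - 1))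
      (q * ((∑' i, μ.rowTerm q i) * ∑' j, ν.rowTerm q j)
        + (∑' i, μ.rowTerm q i) * (q / (q - 1)) + q / (q - 1) * ∑' j, ν.rowTerm q j) := by
  simp only [zpow_part_add_part_sub_zpow_eq μ ν (ne_zero_of_one_lt_norm hq)]
  have hμ := (μ.summable_rowTerm q).hasSum
  have hν := (ν.summable_rowTerm q).hasSum
  have hμ' := μ.summable_norm_rowTerm q
  have hν' := ν.summable_norm_rowTerm q
  have hgeo := hasSum_zpow_neg hq
  have hgeo' := summable_norm_zpow_neg hq
  exact (((hμ.mul_of_summable_norm hν hμ' hν').mul_left q).add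
    (hμ.mul_of_summable_norm hgeo hμ' hgeo')).add (hgeo.mul_of_summable_norm hν hgeo' hν')

lemma summable_norm_zpow_part_add_part_sub_zpow (ν : Partition') (hq : 1 < ‖q‖) :
    Summable fun p : ℕ × ℕ =>
      ‖q ^ ((μ.part p.1 : ℤ) + (ν.part p.2 : ℤ) - p.1 - p.2 - 1) - q ^ (-(p.1 : ℤ) - p.2 - 1)‖ := by
  simp only [zpow_part_add_part_sub_zpow_eq μ ν (ne_zero_of_one_lt_norm hq)]
  have hμ := μ.summable_norm_rowTerm q
  have hν := ν.summable_norm_rowTerm q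
  have hgeo := summable_norm_zpow_neg hq
  have hμν : Summable fun p : ℕ × ℕ => ‖q * (μ.rowTerm q p.1 * ν.rowTerm q p.2)‖ := by
    simpa only [norm_mul q] using (hμ.mul_norm hν).mul_left ‖q‖
  exact (hμν.norm_add (hμ.mul_norm hgeo)).norm_add (hgeo.mul_norm hν)

end Partition'

/-- Equation (56): with `a = e^{−t}`, `F_{μ¹μ²}(q, a) = f_{μ¹μ²}(q) − a f_{μ¹}(q) − a f_{μ²}(q)`,
where `f_μ(q) = Σ_{x∈μ} q^{c(x)}` and `f_{μ¹μ²}(q) = Σ_{i,j≥1} (q^{μ¹_i+μ²_j−i−j+1} − q^{−i−j+1})`. -/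
theorem F_eq_f_sums (μ1 μ2 : Partition') (q a : ℂ) (hq : 1 < ‖q‖) :
    Summable (fun p : ℕ × ℕ =>
      ‖q ^ ((μ1.part p.1 : ℤ) + (μ2.part p.2 : ℤ) - (p.1 : ℤ) - (p.2 : ℤ) - 1) -
        q ^ (-(p.1 : ℤ) - (p.2 : ℤ) - 1)‖) ∧
    Summable (fun i : ℕ => ‖q ^ ((μ1.part i : ℤ) - (i : ℤ) - 1) - a * q ^ (-(i : ℤ) - 1)‖) ∧
    Summable (fun j : ℕ => ‖q ^ ((μ2.part j : ℤ) - (j : ℤ) - 1) - a * q ^ (-(j : ℤ) - 1)‖) ∧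
    q * ((∑' i : ℕ, (q ^ ((μ1.part i : ℤ) - (i : ℤ) - 1) - a * q ^ (-(i : ℤ) - 1))) *
          (∑' j : ℕ, (q ^ ((μ2.part j : ℤ) - (j : ℤ) - 1) - a * q ^ (-(j : ℤ) - 1))) -
        (1 - a) ^ 2 / (q - 1) ^ 2) =
      (∑' p : ℕ × ℕ,
          (q ^ ((μ1.part p.1 : ℤ) + (μ2.part p.2 : ℤ) - (p.1 : ℤ) - (p.2 : ℤ) - 1) -
            q ^ (-(p.1 : ℤ) - (p.2 : ℤ) - 1))) -
        a * (∑ x ∈ μ1.cells, q ^ Partition'.content x) -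
        a * (∑ x ∈ μ2.cells, q ^ Partition'.content x) := by
  have hq0 := ne_zero_of_one_lt_norm hq
  have hq1 : q - 1 ≠ 0 := sub_ne_zero.mpr fun h => by simp [h] at hq
  refine ⟨μ1.summable_norm_zpow_part_add_part_sub_zpow μ2 hq,
    μ1.summable_norm_zpow_part_sub_mul_zpow hq a, μ2.summable_norm_zpow_part_sub_mul_zpow hq a, ?_⟩
  have hf1 := μ1.sub_one_mul_sum_cells_zpow_content hq0
  have hf2 := μ2.sub_one_mul_sum_cells_zpow_content hq0
  rw [mul_comm] at hf1 hf2
  rw [(μ1.hasSum_zpow_part_sub_mul_zpow hq a).tsum_eq,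
    (μ2.hasSum_zpow_part_sub_mul_zpow hq a).tsum_eq,
    (μ1.hasSum_zpow_part_add_part_sub_zpow μ2 hq).tsum_eq, eq_div_of_mul_eq hq1 hf1,
    eq_div_of_mul_eq hq1 hf2]
  field_simp
  ring
end

section
/- Let μ^1, μ^2 be partitions, let q, a ∈ ℂ with |q| > 1, and define (as in eqs. (56)–(60) of the paper) f_μ(q) = Σ_{x∈μ} q^{c(x)}, f_{μ^1 (μ^2)^t}(q) = Σ_{i,j≥1} ( q^{μ^1_i + (μ^2)^t_j − i − j + 1} − q^{−i−j+1} ), and F_{μ^1 (μ^2)^t}(q, a) = f_{μ^1 (μ^2)^t}(q) − a f_{μ^1}(q) − a f_{(μ^2)^t}(q). Then for all u ∈ ℂ of sufficiently small modulus, the series Σ_{n≥1} u^n F_{μ^1 (μ^2)^t}(q^n, a^n) / n converges absolutely and exp( Σ_{n≥1} u^n F_{μ^1 (μ^2)^t}(q^n, a^n) / n ) = ∏_{i,j=1}^∞ (1 − u q^{−i−j+1})(1 − u a q^{μ^1_i − i − j + 1})(1 − u a q^{(μ^2)^t_j − i − j + 1}) / ( (1 − u q^{μ^1_i + (μ^2)^t_j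 − i − j + 1})(1 − u a q^{−i−j+1})² ), the infinite product converging absolutely. -/
/-- The content polynomial `f_μ(Q) = Σ_{x∈μ} Q^{c(x)}` (equation (60)). -/
noncomputable def fContent (μ : Partition') (Q : ℂ) : ℂ :=
  ∑ x ∈ μ.cells, Q ^ Partition'.content x

/-- `f_{μ¹(μ²)ᵗ}(Q) = Σ_{i,j≥1} (Q^{μ¹_i + (μ²)ᵗ_j − i − j + 1} − Q^{−i−j+1})`
(equation (57)), absolutely convergent for `|Q| > 1`. -/
noncomputable def fDouble (μ1 μ2 : Partition') (Q : ℂ) : ℂ :=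
  ∑' p : ℕ × ℕ,
    (Q ^ ((μ1.part p.1 : ℤ) + (μ2.conj.part p.2 : ℤ) - (p.1 : ℤ) - (p.2 : ℤ) - 1) -
      Q ^ (-(p.1 : ℤ) - (p.2 : ℤ) - 1))

/-- `F_{μ¹(μ²)ᵗ}(Q, A) = f_{μ¹(μ²)ᵗ}(Q) − A f_{μ¹}(Q) − A f_{(μ²)ᵗ}(Q)` (equation (56)). -/
noncomputable def FF (μ1 μ2 : Partition') (Q A : ℂ) : ℂ :=
  fDouble μ1 μ2 Q - A * fContent μ1 Q - A * fContent μ2.conj Q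

/-- The factor of the Nekrasov-type infinite product in equation (61), indexed by a
pair `p` of nonnegative integers (corresponding to `(i, j) = (p.1 + 1, p.2 + 1)`). -/
noncomputable def nekFactor (μ1 μ2 : Partition') (q a u : ℂ) (p : ℕ × ℕ) : ℂ :=
  ((1 - u * q ^ (-(p.1 : ℤ) - (p.2 : ℤ) - 1)) *
      (1 - u * a * q ^ ((μ1.part p.1 : ℤ) - (p.1 : ℤ) - (p.2 : ℤ) - 1)) *
      (1 - u * a * q ^ ((μ2.conj.part p.2 : ℤ) - (p.1 : ℤ) - (p.2 : ℤ) - 1))) /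
    ((1 - u * q ^ ((μ1.part p.1 : ℤ) + (μ2.conj.part p.2 : ℤ) - (p.1 : ℤ) - (p.2 : ℤ) - 1)) *
      (1 - u * a * q ^ (-(p.1 : ℤ) - (p.2 : ℤ) - 1)) ^ 2)

open Complex

section LogSeries

variable {ι : Type*}

lemma norm_pow_succ_div_le {z : ℂ} (hz : ‖z‖ ≤ 1 / 2) (n : ℕ) :
    ‖z ^ (n + 1) / ((n : ℂ) + 1)‖ ≤ (1 / 2) ^ n * ‖z‖ := by
  have hn : (1 : ℝ) ≤ ‖(n : ℂ) + 1‖ := by norm_cast; simp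
  calc ‖z ^ (n + 1) / ((n : ℂ) + 1)‖ ≤ ‖z‖ ^ n * ‖z‖ := by
        rw [norm_div, norm_pow, pow_succ]; exact div_le_self (by positivity) hn
    _ ≤ (1 / 2) ^ n * ‖z‖ := by gcongr

lemma summable_pow_succ_div_uncurry {w : ι → ℂ} (hw : Summable w) (hw_le : ∀ i, ‖w i‖ ≤ 1 / 2) :
    Summable (Function.uncurry fun (n : ℕ) i => w i ^ (n + 1) / ((n : ℂ) + 1)) := by
  refine .of_norm_bounded ((summable_geometric_two.mul_of_nonneg hw.norm (fun _ => by positivity)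
    fun _ => norm_nonneg _)) fun x => ?_
  obtain ⟨n, i⟩ := x
  exact norm_pow_succ_div_le (hw_le i) n

lemma hasSum_tsum_pow_succ_div {w : ι → ℂ} (hw : Summable w) (hw_le : ∀ i, ‖w i‖ ≤ 1 / 2) :
    HasSum (fun n : ℕ => ∑' i, w i ^ (n + 1) / ((n : ℂ) + 1)) (-∑' i, log (1 - w i)) := by
  have hF := summable_pow_succ_div_uncurry hw hw_le
  have hsum : ∑' x, Function.uncurry (fun (n : ℕ) i => w i ^ (n + 1) / ((n : ℂ) + 1)) x
      = -∑' i, log (1 - w i) := by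
    rw [hF.tsum_prod]
    simp only [Function.uncurry_apply_pair]
    rw [← hF.tsum_comm, ← tsum_neg]
    exact tsum_congr fun i =>
      (hasSum_taylorSeries_neg_log' ((hw_le i).trans_lt (by norm_num))).tsum_eq
  simpa [hsum] using hF.hasSum.prod_fiberwise fun n => (hF.prod_factor n).hasSum

lemma summable_norm_cexp_sub_one {f : ι → ℂ} (hf : Summable f) :
    Summable fun i => ‖exp (f i) - 1‖ := by
  refine (hf.norm.mul_left 2).of_norm_bounded_eventually ?_
  filter_upwards [hf.norm.tendsto_cofinite_zero.eventually_le_const one_pos] with i hi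
  simpa using norm_exp_sub_one_le hi

lemma exp_sum_intCast_mul_log {κ : Type*} (s : Finset κ) (σ : κ → ℤ) {z : κ → ℂ}
    (hz : ∀ k ∈ s, z k ≠ 0) : exp (∑ k ∈ s, σ k * log (z k)) = ∏ k ∈ s, z k ^ σ k := by
  rw [exp_sum]
  exact Finset.prod_congr rfl fun k hk => by rw [exp_int_mul, exp_log (hz k hk)]

theorem exists_hasSum_and_hasProd_one_sub_zpow {κ : Type*} [Fintype κ] (σ : κ → ℤ)
    (w : κ → ι → ℂ) (hw : ∀ k, Summable (w k)) (hw_le : ∀ k i, ‖w k i‖ ≤ 1 / 2) :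
    ∃ L : ℂ, HasSum (fun n : ℕ => -∑ k, σ k * ∑' i, w k i ^ (n + 1) / ((n : ℂ) + 1)) L ∧
      HasProd (fun i => ∏ k, (1 - w k i) ^ σ k) (exp L) ∧
      Summable fun i => ‖∏ k, (1 - w k i) ^ σ k - 1‖ := by
  have hlog : ∀ k, Summable fun i => log (1 - w k i) := fun k => by
    simpa [sub_eq_add_neg] using summable_log_one_add_of_summable (hw k).neg
  have hne : ∀ k i, 1 - w k i ≠ 0 := fun k i => sub_ne_zero.2 fun h => by
    have := hw_le k i
    rw [← h, norm_one] at this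
    norm_num at this
  have hexp : ∀ i, exp (∑ k, σ k * log (1 - w k i)) = ∏ k, (1 - w k i) ^ σ k := fun i =>
    exp_sum_intCast_mul_log _ σ fun k _ => hne k i
  have hg : HasSum (fun i => ∑ k, σ k * log (1 - w k i)) (∑ k, σ k * ∑' i, log (1 - w k i)) :=
    hasSum_sum fun k _ => (hlog k).hasSum.mul_left _
  refine ⟨∑ k, (σ k : ℂ) * ∑' i, log (1 - w k i), ?_, ?_, ?_⟩
  · have := hasSum_sum fun k (_ : k ∈ Finset.univ) =>
      (hasSum_tsum_pow_succ_div (hw k) (hw_le k)).mul_left (σ k : ℂ)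
    simpa using this.neg
  · simpa [Function.comp_def, hexp] using hg.cexp
  · simpa [hexp] using summable_norm_cexp_sub_one hg.summable

end LogSeries

section ContentSums

variable {Q : ℂ}

lemma Partition'.mem_cells {μ : Partition'} {x : ℕ × ℕ} : x ∈ μ.cells ↔ x.2 < μ.part x.1 := by
  simp [Partition'.cells, Partition'.cellsSet]

lemma fContent_eq_tsum_ite (μ : Partition') :
    fContent μ Q = ∑' p : ℕ × ℕ, if p.2 < μ.part p.1 then Q ^ Partition'.content p else 0 := by
  rw [fContent, tsum_eq_sum (s := μ.cells) fun p hp => if_neg (mt Partition'.mem_cells.2 hp)]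
  exact Finset.sum_congr rfl fun p hp => (if_pos (Partition'.mem_cells.1 hp)).symm

lemma summable_zpow_of_add_le (hQ : 1 < ‖Q‖) {M : ℕ} {E : ℕ × ℕ → ℤ}
    (hE : ∀ p, E p + p.1 + p.2 ≤ M) : Summable fun p => Q ^ E p := by
  have hQ0 : ‖Q‖ ≠ 0 := (one_pos.trans hQ).ne'
  have hr0 : 0 ≤ ‖Q‖⁻¹ := by positivity
  have hr1 : ‖Q‖⁻¹ < 1 := inv_lt_one_of_one_lt₀ hQ
  have hgeom := summable_geometric_of_lt_one hr0 hr1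
  refine .of_norm_bounded ((hgeom.mul_of_nonneg hgeom (fun _ => by positivity)
    fun _ => by positivity).mul_left (‖Q‖ ^ M)) fun p => ?_
  calc ‖Q ^ E p‖ = ‖Q‖ ^ E p := norm_zpow _ _
    _ ≤ ‖Q‖ ^ ((M : ℤ) - p.1 - p.2) := zpow_le_zpow_right₀ hQ.le (by linarith [hE p])
    _ = ‖Q‖ ^ M * (‖Q‖⁻¹ ^ p.1 * ‖Q‖⁻¹ ^ p.2) := by
      rw [zpow_sub₀ hQ0, zpow_sub₀ hQ0]
      simp [div_eq_mul_inv, mul_assoc]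

lemma hasSum_zpow_sub_zpow (hQ : 1 < ‖Q‖) (m i : ℕ) :
    HasSum (fun j : ℕ => Q ^ ((m : ℤ) - i - j - 1) - Q ^ (-(i : ℤ) - j - 1))
      (∑ j ∈ Finset.range m, Q ^ ((j : ℤ) - i)) := by
  have hQ0 : Q ≠ 0 := norm_pos_iff.1 (one_pos.trans hQ)
  have hQ1 : Q ≠ 1 := by rintro rfl; simp at hQ
  have hgeom := (hasSum_geometric_of_norm_lt_one (ξ := Q⁻¹)
    (by simpa using inv_lt_one_of_one_lt₀ hQ)).mul_left (Q ^ (-(i : ℤ) - 1) * (Q ^ m - 1))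
  have hterm : ∀ j : ℕ, Q ^ (-(i : ℤ) - 1) * (Q ^ m - 1) * Q⁻¹ ^ j
      = Q ^ ((m : ℤ) - i - j - 1) - Q ^ (-(i : ℤ) - j - 1) := fun j => by
    have hshift : ∀ e : ℤ, Q ^ (e - j) = Q ^ e * Q⁻¹ ^ j := fun e => by
      rw [zpow_sub₀ hQ0, zpow_natCast, div_eq_mul_inv, inv_pow]
    rw [show (m : ℤ) - i - j - 1 = m + (-(i : ℤ) - 1) - j by ring,
      show -(i : ℤ) - j - 1 = -(i : ℤ) - 1 - j by ring, hshift, hshift, zpow_add₀ hQ0,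
      zpow_natCast]
    ring
  have hval : ∑ j ∈ Finset.range m, Q ^ ((j : ℤ) - i)
      = Q ^ (-(i : ℤ) - 1) * (Q ^ m - 1) * (1 - Q⁻¹)⁻¹ := by
    have hsum : ∑ j ∈ Finset.range m, Q ^ ((j : ℤ) - i)
        = (∑ j ∈ Finset.range m, Q ^ j) * Q ^ (-(i : ℤ)) := by
      rw [Finset.sum_mul]
      exact Finset.sum_congr rfl fun j _ => by rw [← zpow_natCast, ← zpow_add₀ hQ0, sub_eq_add_neg]
    rw [hsum, geom_sum_eq hQ1, zpow_sub_one₀ hQ0]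
    have : Q - 1 ≠ 0 := sub_ne_zero.2 hQ1
    field_simp
  rw [hval]
  simpa only [hterm] using hgeom

lemma fContent_eq_tsum_zpow_sub_zpow (μ : Partition') (hQ : 1 < ‖Q‖) :
    fContent μ Q =
      ∑' p : ℕ × ℕ, (Q ^ ((μ.part p.1 : ℤ) - p.1 - p.2 - 1) - Q ^ (-(p.1 : ℤ) - p.2 - 1)) := by
  have hcells : Summable fun p : ℕ × ℕ =>
      if p.2 < μ.part p.1 then Q ^ Partition'.content p else 0 :=
    summable_of_ne_finset_zero (s := μ.cells) fun p hp => if_neg (mt Partition'.mem_cells.2 hp)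
  have hdiff : Summable fun p : ℕ × ℕ =>
      Q ^ ((μ.part p.1 : ℤ) - p.1 - p.2 - 1) - Q ^ (-(p.1 : ℤ) - p.2 - 1) := by
    refine (summable_zpow_of_add_le hQ (M := μ.part 0) fun p => ?_).sub
      (summable_zpow_of_add_le hQ (M := 0) fun p => by omega)
    have := μ.antitone' (Nat.zero_le p.1)
    omega
  rw [fContent_eq_tsum_ite, hcells.tsum_prod, hdiff.tsum_prod]
  refine tsum_congr fun i => ?_
  dsimp only
  rw [(hasSum_zpow_sub_zpow hQ _ i).tsum_eq,
    tsum_eq_sum (s := Finset.range (μ.part i)) fun j hj => if_neg (by simpa using hj)]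
  exact Finset.sum_congr rfl fun j hj => if_pos (Finset.mem_range.1 hj)

lemma fContent_eq_tsum_zpow_sub_zpow' (ν : Partition') (hQ : 1 < ‖Q‖) :
    fContent ν Q =
      ∑' p : ℕ × ℕ, (Q ^ ((ν.part p.2 : ℤ) - p.1 - p.2 - 1) - Q ^ (-(p.1 : ℤ) - p.2 - 1)) := by
  rw [fContent_eq_tsum_zpow_sub_zpow ν hQ, ← (Equiv.prodComm ℕ ℕ).tsum_eq]
  refine tsum_congr fun p => ?_
  simp only [Equiv.prodComm_apply, Prod.fst_swap, Prod.snd_swap]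
  ring_nf

lemma tsum_mul_zpow_pow {ι : Type*} (b : ℂ) (E : ι → ℤ) (m : ℕ) :
    ∑' i, (b * Q ^ E i) ^ m = b ^ m * ∑' i, (Q ^ m) ^ E i := by
  rw [← tsum_mul_left]
  exact tsum_congr fun i => by
    rw [mul_pow, ← zpow_natCast (Q ^ E i), ← zpow_mul, mul_comm (E i), zpow_mul, zpow_natCast]

end ContentSums

section Nekrasov

variable (μ1 μ2 : Partition') {q : ℂ} (a u : ℂ)

def nekMult : Fin 5 → ℤ := ![1, 1, 1, -1, -2]

def nekCoeff : Fin 5 → ℂ := ![u, u * a, u * a, u, u * a]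

noncomputable def nekExp : Fin 5 → ℕ × ℕ → ℤ :=
  ![fun p => -(p.1 : ℤ) - p.2 - 1,
    fun p => (μ1.part p.1 : ℤ) - p.1 - p.2 - 1,
    fun p => (μ2.conj.part p.2 : ℤ) - p.1 - p.2 - 1,
    fun p => (μ1.part p.1 : ℤ) + μ2.conj.part p.2 - p.1 - p.2 - 1,
    fun p => -(p.1 : ℤ) - p.2 - 1]

lemma nekFactor_eq_prod (p : ℕ × ℕ) :
    nekFactor μ1 μ2 q a u p = ∏ k, (1 - nekCoeff a u k * q ^ nekExp μ1 μ2 k p) ^ nekMult k := by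
  simp only [nekFactor, nekCoeff, nekExp, nekMult, Fin.prod_univ_five, Matrix.cons_val',
    Matrix.cons_val_fin_one, Matrix.cons_val_zero, Matrix.cons_val_one, Matrix.cons_val,
    Int.reduceNeg, zpow_neg, zpow_ofNat, pow_one, div_eq_mul_inv, mul_inv_rev]
  ring

lemma nekExp_add_le (k : Fin 5) (p : ℕ × ℕ) :
    nekExp μ1 μ2 k p + p.1 + p.2 ≤ (μ1.part 0 + μ2.conj.part 0 : ℕ) := by
  have := μ1.antitone' (Nat.zero_le p.1)
  have := μ2.conj.antitone' (Nat.zero_le p.2)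
  fin_cases k <;> simp [nekExp] <;> omega

lemma FF_eq_tsum {Q : ℂ} (hQ : 1 < ‖Q‖) (A : ℂ) :
    FF μ1 μ2 Q A = ∑' p, Q ^ nekExp μ1 μ2 3 p - ∑' p, Q ^ nekExp μ1 μ2 0 p
      - A * (∑' p, Q ^ nekExp μ1 μ2 1 p - ∑' p, Q ^ nekExp μ1 μ2 0 p)
      - A * (∑' p, Q ^ nekExp μ1 μ2 2 p - ∑' p, Q ^ nekExp μ1 μ2 0 p) := by
  have hs k := summable_zpow_of_add_le hQ (nekExp_add_le μ1 μ2 k)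
  rw [← (hs 3).tsum_sub (hs 0), ← (hs 1).tsum_sub (hs 0), ← (hs 2).tsum_sub (hs 0), FF,
    fContent_eq_tsum_zpow_sub_zpow μ1 hQ, fContent_eq_tsum_zpow_sub_zpow' μ2.conj hQ]
  rfl

lemma pow_succ_mul_FF_div_eq (hq : 1 < ‖q‖) (n : ℕ) :
    u ^ (n + 1) * FF μ1 μ2 (q ^ (n + 1)) (a ^ (n + 1)) / ((n : ℂ) + 1) =
      -∑ k, nekMult k *
        ∑' p, (nekCoeff a u k * q ^ nekExp μ1 μ2 k p) ^ (n + 1) / ((n : ℂ) + 1) := by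
  rw [FF_eq_tsum μ1 μ2 (by rw [norm_pow]; exact one_lt_pow₀ hq n.succ_ne_zero)]
  simp only [tsum_div_const, tsum_mul_zpow_pow, Fin.sum_univ_five]
  simp only [nekMult, nekCoeff, nekExp, Matrix.cons_val, Int.cast_one, Int.cast_neg,
    Int.cast_ofNat]
  ring

lemma exists_pos_forall_norm_nekCoeff_mul_le (hq : 1 < ‖q‖) :
    ∃ ε > 0, ∀ u : ℂ, ‖u‖ < ε → ∀ k p, ‖nekCoeff a u k * q ^ nekExp μ1 μ2 k p‖ ≤ 1 / 2 := by
  set C := (1 + ‖a‖) * ‖q‖ ^ (μ1.part 0 + μ2.conj.part 0) with hCdef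
  have hC : 0 < C := by positivity
  refine ⟨(2 * C)⁻¹, by positivity, fun u hu k p => ?_⟩
  have hcoeff : ‖nekCoeff a u k‖ ≤ ‖u‖ * (1 + ‖a‖) := by
    fin_cases k <;> simp [nekCoeff] <;> nlinarith [norm_nonneg u, norm_nonneg a]
  have hpow : ‖q ^ nekExp μ1 μ2 k p‖ ≤ ‖q‖ ^ (μ1.part 0 + μ2.conj.part 0) := by
    rw [norm_zpow, ← zpow_natCast]
    exact zpow_le_zpow_right₀ hq.le (by have := nekExp_add_le μ1 μ2 k p; omega)
  calc ‖nekCoeff a u k * q ^ nekExp μ1 μ2 k p‖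
        ≤ ‖u‖ * (1 + ‖a‖) * ‖q‖ ^ (μ1.part 0 + μ2.conj.part 0) := by
          rw [norm_mul]; gcongr
    _ = ‖u‖ * C := by rw [hCdef]; ring
    _ ≤ 1 / 2 := by nlinarith [mul_inv_cancel₀ (mul_pos two_pos hC).ne']

end Nekrasov

/-- Equation (61): for `|q| > 1` and all `u` of sufficiently small modulus, the series
`Σ_{n≥1} uⁿ F_{μ¹(μ²)ᵗ}(qⁿ, aⁿ)/n` converges absolutely and its exponential equals the
stated absolutely convergent infinite product. -/
theorem nekrasov_product_expression (μ1 μ2 : Partition') (q a : ℂ) (hq : 1 < ‖q‖) :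
    ∃ ε > 0, ∀ u : ℂ, ‖u‖ < ε →
      Summable (fun n : ℕ =>
        ‖u ^ (n + 1) * FF μ1 μ2 (q ^ (n + 1)) (a ^ (n + 1)) / ((n : ℂ) + 1)‖) ∧
      Summable (fun p : ℕ × ℕ => ‖nekFactor μ1 μ2 q a u p - 1‖) ∧
      Multipliable (fun p : ℕ × ℕ => nekFactor μ1 μ2 q a u p) ∧
      Complex.exp (∑' n : ℕ, u ^ (n + 1) * FF μ1 μ2 (q ^ (n + 1)) (a ^ (n + 1)) / ((n : ℂ) + 1)) =
        ∏' p : ℕ × ℕ, nekFactor μ1 μ2 q a u p := by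
  obtain ⟨ε, hε, hsmall⟩ := exists_pos_forall_norm_nekCoeff_mul_le μ1 μ2 a hq
  refine ⟨ε, hε, fun u hu => ?_⟩
  obtain ⟨L, hL, hP, hN⟩ := exists_hasSum_and_hasProd_one_sub_zpow nekMult
    (fun k p => nekCoeff a u k * q ^ nekExp μ1 μ2 k p)
    (fun k => (summable_zpow_of_add_le hq (nekExp_add_le μ1 μ2 k)).mul_left _) (hsmall u hu)
  simp only [← nekFactor_eq_prod, ← pow_succ_mul_FF_div_eq μ1 μ2 a u hq] at hL hP hN
  exact ⟨summable_norm_iff.2 hL.summable, hN, hP.multipliable, by rw [hL.tsum_eq, hP.tprod_eq]⟩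
end
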